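/- Let Γ = (C, A, Δ) be a normed BPA system and R ⊆ C_G. For every process α: α ⟹ ε if and only if α_R ⟹_R ε. -/

import Mathlib

open Relation

/-- A BPA system over constants `C` and actions `A`: a distinguished silent
action `tau`, and a finite set of transition rules `X —ℓ→ α`, where `C` and
`A` are finite. -/
structure BPA (C A : Type) where
  tau : A
  rules : Set (C × A × List C)
  finC : Finite C
  finA : Finite A
  finRules : rules.Finite

namespace BPA

variable {C A : Type}

/-- One-step labelled transition between processes.  Processes are strings
over `C` (lists, with the leftmost constant acting first). -/
def Step (Γ : BPA C A) (ℓ : A) (p q : List C) : Prop :=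
  ∃ X γ β, (X, ℓ, γ) ∈ Γ.rules ∧ p = X :: β ∧ q = γ ++ β

/-- A transition carrying an arbitrary label. -/
def AnyStep (Γ : BPA C A) (p q : List C) : Prop := ∃ ℓ, Γ.Step ℓ p q

/-- `⟹` : the reflexive transitive closure of silent steps. -/
def TauStar (Γ : BPA C A) : List C → List C → Prop := ReflTransGen (Γ.Step Γ.tau)

/-- A process is normed if it can reach the empty process `ε`. -/
def NormedProc (Γ : BPA C A) (p : List C) : Prop := ReflTransGen Γ.AnyStep p []

/-- The BPA system is normed. -/
def Normed (Γ : BPA C A) : Prop := ∀ X : C, Γ.NormedProc [X]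

/-- A chain of `s`-steps starting at `start` in which every visited state is
related by `r` to the process `anchor`. -/
def RelChain (s : List C → List C → Prop) (r : List C → List C → Prop)
    (anchor : List C) : List C → List C → Prop :=
  ReflTransGen fun x y => s x y ∧ r anchor y

/-- Branching bisimulation (an equivalence relation by convention). -/
def IsBranchingBisim (Γ : BPA C A) (r : List C → List C → Prop) : Prop :=
  Equivalence r ∧ ∀ α β, r α β →
    ((∀ a, a ≠ Γ.tau → ∀ α', Γ.Step a α α' →
        ∃ β'' β', RelChain (Γ.Step Γ.tau) r β β β'' ∧ Γ.Step a β'' β' ∧ r α' β') ∧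
     (∀ α', Γ.Step Γ.tau α α' → ¬ r α α' →
        ∃ β'' β', RelChain (Γ.Step Γ.tau) r β β β'' ∧ Γ.Step Γ.tau β'' β' ∧
          ¬ r β'' β' ∧ r α' β'))

/-- Branching bisimilarity `≃` : the largest branching bisimulation. -/
def Bisim (Γ : BPA C A) (α β : List C) : Prop :=
  ∃ r, Γ.IsBranchingBisim r ∧ r α β

/-- A ground process: it can silently reach `ε`. -/
def Ground (Γ : BPA C A) (p : List C) : Prop := Γ.TauStar p []

/-- The set `C_G` of ground constants. -/
def GroundC (Γ : BPA C A) : Set C := {X | Γ.Ground [X]}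

/-- `R`-equality `=_R`: the two processes differ only in suffixes over `R`. -/
def REq (R : Set C) (α β : List C) : Prop :=
  ∃ ζ a b, α = ζ ++ a ∧ β = ζ ++ b ∧ (∀ X ∈ a, X ∈ R) ∧ (∀ X ∈ b, X ∈ R)

open Classical in
/-- The `R`-normal form `α_R` of a process: delete the maximal suffix over `R`. -/
noncomputable def nf (R : Set C) (α : List C) : List C :=
  (α.reverse.dropWhile fun X => decide (X ∈ R)).reverse

/-- A process is in `R`-normal form. -/
def InNF (R : Set C) (α : List C) : Prop := nf R α = α

/-- The `R`-transition relation `—ℓ→_R` between `R`-normal forms. -/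
def StepR (Γ : BPA C A) (R : Set C) (ℓ : A) (ζ η : List C) : Prop :=
  ∃ α β, ζ = nf R α ∧ η = nf R β ∧ Γ.Step ℓ α β

/-- `⟹_R`. -/
def TauStarR (Γ : BPA C A) (R : Set C) : List C → List C → Prop :=
  ReflTransGen (Γ.StepR R Γ.tau)

/-- `R`-bisimulation: an equivalence relation containing `=_R` satisfying
ground preservation and the relativized branching transfer conditions. -/
def IsRBisim (Γ : BPA C A) (R : Set C) (r : List C → List C → Prop) : Prop :=
  Equivalence r ∧ (∀ α β, REq R α β → r α β) ∧
  ∀ α β, r α β →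
    ((Γ.TauStar α [] → Γ.TauStar β []) ∧
     (∀ α', Γ.Step Γ.tau α α' → ¬ r α α' →
        ∃ β'' β', RelChain (Γ.StepR R Γ.tau) r β (nf R β) β'' ∧
          Γ.StepR R Γ.tau β'' β' ∧ ¬ r β'' β' ∧ r α' β') ∧
     (∀ a, a ≠ Γ.tau → ∀ α', Γ.Step a α α' →
        ∃ β'' β', RelChain (Γ.StepR R Γ.tau) r β (nf R β) β'' ∧
          Γ.StepR R a β'' β' ∧ r α' β'))

/-- `R`-bisimilarity `≃_R` : the largest `R`-bisimulation. -/
def RBisim (Γ : BPA C A) (R : Set C) (α β : List C) : Prop :=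
  ∃ r, Γ.IsRBisim R r ∧ r α β

/-- `Id_R = {X ∈ C : X ≃_R ε}`. -/
def IdR (Γ : BPA C A) (R : Set C) : Set C := {X | Γ.RBisim R [X] []}

/-- `Rd_R(γ) = {X ∈ C : Xγ ≃_R γ}`. -/
def RdR (Γ : BPA C A) (R : Set C) (γ : List C) : Set C :=
  {X | Γ.RBisim R (X :: γ) γ}

/-- An admissible reference set: `R = Id_R`. -/
def Admissible (Γ : BPA C A) (R : Set C) : Prop := R = Γ.IdR R

end BPA

/-!
A ground constant can be erased silently, so appending or stripping a suffix over `R ⊆ C_G`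
does not change whether a process is ground. An `R`-step `ζ —τ→_R η` comes from a real step
`β —τ→ γ` between representatives of `ζ` and `η`; by that invariance, groundness of `η` passes to
`γ`, then to `β`, and then to every process with normal form `ζ`.
-/

namespace BPA

variable {C A : Type} {Γ : BPA C A}

theorem Step.append_right {ℓ : A} {p q : List C} (h : Γ.Step ℓ p q) (r : List C) :
    Γ.Step ℓ (p ++ r) (q ++ r) := by
  obtain ⟨X, γ, β, hX, rfl, rfl⟩ := h
  exact ⟨X, γ, β ++ r, hX, rfl, by simp⟩

theorem TauStar.append_right {p q : List C} (h : Γ.TauStar p q) (r : List C) :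
    Γ.TauStar (p ++ r) (q ++ r) :=
  ReflTransGen.lift (· ++ r) (fun _ _ hs => hs.append_right r) _ _ h

theorem TauStar.nil_of_forall_mem {s : List C} (h : ∀ X ∈ s, Γ.TauStar [X] []) :
    Γ.TauStar s [] := by
  induction s with
  | nil => exact ReflTransGen.refl
  | cons X t ih =>
      have hX : Γ.TauStar (X :: t) t := (h X (by simp)).append_right t
      exact hX.trans (ih fun Y hY => h Y (by simp [hY]))

/-- Silent moves of `p ++ s` only touch `s` once `p` is consumed. -/
theorem TauStar.nil_of_append {p s : List C} (h : Γ.TauStar (p ++ s) []) : Γ.TauStar p [] := by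
  generalize hm : p ++ s = m at h
  induction h using ReflTransGen.head_induction_on generalizing p with
  | refl =>
      rw [(List.append_eq_nil_iff.mp hm).1]
      exact ReflTransGen.refl
  | head hs _ ih =>
      obtain _ | ⟨X, p'⟩ := p
      · exact ReflTransGen.refl
      obtain ⟨Z, γ, β, hZ, hXZ, rfl⟩ := hs
      obtain ⟨rfl, rfl⟩ : X = Z ∧ p' ++ s = β := by simpa [← hm] using hXZ
      exact ReflTransGen.head ⟨X, γ, p', hZ, rfl, rfl⟩ (ih (p := γ ++ p') (by simp))

theorem exists_eq_nf_append (R : Set C) (a : List C) :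
    ∃ s, a = nf R a ++ s ∧ ∀ X ∈ s, X ∈ R := by
  classical
  refine ⟨(a.reverse.takeWhile fun X => decide (X ∈ R)).reverse, ?_, ?_⟩
  · rw [nf, ← List.reverse_append, List.takeWhile_append_dropWhile, List.reverse_reverse]
  · intro X hX
    simpa using List.mem_takeWhile_imp (List.mem_reverse.mp hX)

@[simp]
theorem nf_nil (R : Set C) : nf R ([] : List C) = [] := by simp [nf]

theorem tauStar_nil_iff_nf {R : Set C} (hR : R ⊆ Γ.GroundC) (a : List C) :
    Γ.TauStar a [] ↔ Γ.TauStar (nf R a) [] := by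
  obtain ⟨s, hs, hsR⟩ := exists_eq_nf_append R a
  refine ⟨fun h => (hs ▸ h).nil_of_append, fun h => ?_⟩
  have hsuffix : Γ.TauStar (nf R a ++ s) s := by simpa using h.append_right s
  rw [hs]
  exact hsuffix.trans (TauStar.nil_of_forall_mem fun X hX => hR (hsR X hX))

theorem TauStar.tauStarR_nf (R : Set C) {a b : List C} (h : Γ.TauStar a b) :
    Γ.TauStarR R (nf R a) (nf R b) :=
  ReflTransGen.lift (nf R) (fun x y hs => ⟨x, y, rfl, rfl, hs⟩) _ _ h

theorem tauStar_nil_of_tauStarR_nf {R : Set C} (hR : R ⊆ Γ.GroundC) {a : List C}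
    (h : Γ.TauStarR R (nf R a) []) : Γ.TauStar a [] := by
  generalize hζ : nf R a = ζ at h
  induction h using ReflTransGen.head_induction_on generalizing a with
  | refl =>
      rw [tauStar_nil_iff_nf hR a, hζ]
      exact ReflTransGen.refl
  | head hs _ ih =>
      obtain ⟨b, c, rfl, rfl, hbc⟩ := hs
      have hb : Γ.TauStar b [] := ReflTransGen.head hbc (ih rfl)
      rwa [tauStar_nil_iff_nf hR, hζ, ← tauStar_nil_iff_nf hR]

end BPA

theorem ground_preserved_general {C A : Type} (Γ : BPA C A)
    (R : Set C) (hR : R ⊆ Γ.GroundC) (α : List C) :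
    Γ.TauStar α [] ↔ Γ.TauStarR R (BPA.nf R α) [] :=
  ⟨fun h => by simpa using h.tauStarR_nf R, BPA.tauStar_nil_of_tauStarR_nf hR⟩

/-- Groundness is robust under relativization: `α ⟹ ε` iff `α_R ⟹_R ε`. -/
theorem ground_preserved {C A : Type} (Γ : BPA C A) (hΓ : Γ.Normed)
    (R : Set C) (hR : R ⊆ Γ.GroundC) (α : List C) :
    Γ.TauStar α [] ↔ Γ.TauStarR R (BPA.nf R α) [] :=
  ground_preserved_general Γ R hR α
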